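/- For x in [−1, −a] ∪ [a, 1], the number z = x + i√(1 − x^2) satisfies z^n = 1 if and only if x ∈ {1, −1, a, −a}. -/

import Mathlib

/-!
On the unit circle `‖w - 1‖² = 2 - 2 Re w`, so the minimality of `ζ` says that every `n`-th root
of unity in the open upper half plane has real part at most `a`. For even `n`, `w ↦ -w̄` permutes
the `n`-th roots of unity and preserves the upper half plane, so such a root also has real part at
least `-a`. The point `x + i√(1 - x²)` lies on the unit circle and, unless `x = ±1`, strictly above
the real axis; hence if it is a root, `|x| ≤ a`, which on `[-1, -a] ∪ [a, 1]` forces `x = ±a`.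
Conversely `±1`, `ζ` and `-ζ̄` are roots.
-/

open ComplexConjugate

namespace Complex

lemma sq_norm_sub_one_of_norm_eq_one {z : ℂ} (hz : ‖z‖ = 1) : ‖z - 1‖ ^ 2 = 2 - 2 * z.re := by
  rw [Complex.sq_norm, normSq_sub, ← Complex.sq_norm, hz]
  simp only [one_pow, map_one, mul_one, sub_left_inj]
  ring

lemma re_le_re_of_norm_sub_one_le {z w : ℂ} (hz : ‖z‖ = 1) (hw : ‖w‖ = 1)
    (h : ‖z - 1‖ ≤ ‖w - 1‖) : w.re ≤ z.re := by
  have := pow_le_pow_left₀ (norm_nonneg _) h 2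
  rw [sq_norm_sub_one_of_norm_eq_one hz, sq_norm_sub_one_of_norm_eq_one hw] at this
  linarith

lemma neg_conj_pow_eq_one_of_even {n : ℕ} (hn : Even n) {w : ℂ} (hw : w ^ n = 1) :
    (-conj w) ^ n = 1 := by
  rw [hn.neg_pow, ← map_pow, hw, map_one]

lemma abs_re_le_re_of_forall_norm_sub_one_le {n : ℕ} (hn : Even n) {ζ : ℂ} (hζ : ‖ζ‖ = 1)
    (hmin : ∀ w : ℂ, w ^ n = 1 → 0 < w.im → ‖ζ - 1‖ ≤ ‖w - 1‖)
    {w : ℂ} (hw : w ^ n = 1) (him : 0 < w.im) (hw1 : ‖w‖ = 1) : |w.re| ≤ ζ.re := by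
  refine abs_le'.2 ⟨re_le_re_of_norm_sub_one_le hζ hw1 (hmin w hw him), ?_⟩
  have := re_le_re_of_norm_sub_one_le hζ (by simpa using hw1)
    (hmin _ (neg_conj_pow_eq_one_of_even hn hw) (by simpa using him))
  simpa using this

lemma norm_mk_eq_one {x y : ℝ} (h : x ^ 2 + y ^ 2 = 1) : ‖(⟨x, y⟩ : ℂ)‖ = 1 := by
  rw [norm_def, normSq_mk, ← sq, ← sq, h, Real.sqrt_one]

lemma norm_mk_sqrt_one_sub_sq {x : ℝ} (hx : x ^ 2 ≤ 1) : ‖(⟨x, √(1 - x ^ 2)⟩ : ℂ)‖ = 1 :=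
  norm_mk_eq_one (by rw [Real.sq_sqrt (by linarith)]; ring)

lemma mk_sqrt_one_sub_sq_eq {x y : ℝ} (h : x ^ 2 + y ^ 2 = 1) (hy : 0 ≤ y) :
    (⟨x, √(1 - x ^ 2)⟩ : ℂ) = ⟨x, y⟩ := by
  rw [← h, add_sub_cancel_left, Real.sqrt_sq hy]

end Complex

lemma eq_or_eq_neg_of_abs_le {a x : ℝ} (hx : x ≤ -a ∨ a ≤ x) (h : |x| ≤ a) : x = a ∨ x = -a := by
  rcases abs_le.1 h with ⟨h₁, h₂⟩
  rcases hx with hx | hx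
  · exact Or.inr (by linarith)
  · exact Or.inl (by linarith)

open Complex

theorem stmt_11_general (n : ℕ) (hev : Even n) (a b : ℝ) (ζ : ℂ)
    (hb : 0 < b)
    (hab : a ^ 2 + b ^ 2 = 1)
    (hζ : ζ = Complex.mk a b) (hroot : ζ ^ n = 1)
    (hmin : ∀ w : ℂ, w ^ n = 1 → 0 < w.im →
      ‖ζ - 1‖ ≤ ‖w - 1‖)
    (x : ℝ) (hx : x ∈ Set.Icc (-1 : ℝ) (-a) ∪ Set.Icc a 1) :
    (Complex.mk x (Real.sqrt (1 - x ^ 2))) ^ n = 1 ↔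
      x = 1 ∨ x = -1 ∨ x = a ∨ x = -a := by
  have ha := abs_le.1 <| (sq_le_one_iff_abs_le_one a).1 (by nlinarith)
  have hx1 : x ^ 2 ≤ 1 := (sq_le_one_iff_abs_le_one x).2 <| abs_le.2 <| by
    rcases hx with hx | hx <;> constructor <;> linarith [hx.1, hx.2, ha.1, ha.2]
  rcases hx1.eq_or_lt with hx_sq | hx_sq
  · obtain ⟨k, rfl⟩ := hev
    refine iff_of_true ?_ ((sq_eq_one_iff.1 hx_sq).imp_right Or.inl)
    rw [mk_sqrt_one_sub_sq_eq (y := 0) (by simpa using hx_sq) le_rfl, ← ofReal_def, ← ofReal_pow,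
      ← two_mul, pow_mul, hx_sq, one_pow, ofReal_one]
  have him : 0 < √(1 - x ^ 2) := Real.sqrt_pos.2 (by linarith)
  constructor
  · intro h
    have hx_abs : |x| ≤ a := by
      simpa [hζ] using abs_re_le_re_of_forall_norm_sub_one_le hev (hζ ▸ norm_mk_eq_one hab) hmin
        h him (norm_mk_sqrt_one_sub_sq hx_sq.le)
    exact Or.inr (Or.inr (eq_or_eq_neg_of_abs_le (hx.imp (·.2) (·.1)) hx_abs))
  · rintro (rfl | rfl | rfl | rfl)
    · norm_num at hx_sq
    · norm_num at hx_sq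
    · rwa [mk_sqrt_one_sub_sq_eq hab hb.le, ← hζ]
    · have : (⟨-a, b⟩ : ℂ) = -conj ζ := by apply Complex.ext <;> simp [hζ]
      rw [mk_sqrt_one_sub_sq_eq (by simpa using hab) hb.le, this]
      exact neg_conj_pow_eq_one_of_even hev hroot

/-- For `x ∈ [-1, -a] ∪ [a, 1]`, the number `z = x + i√(1 - x²)` satisfies
`z^n = 1` iff `x ∈ {1, -1, a, -a}`. -/
theorem stmt_11 (n : ℕ) (hn : 6 ≤ n) (hev : Even n) (a b : ℝ) (ζ : ℂ)
    (ha : 0 < a) (ha1 : a < 1) (hb : 0 < b) (hb1 : b < 1)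
    (hab : a ^ 2 + b ^ 2 = 1)
    (hζ : ζ = Complex.mk a b) (hroot : ζ ^ n = 1) (him : 0 < ζ.im)
    (hmin : ∀ w : ℂ, w ^ n = 1 → 0 < w.im →
      ‖ζ - 1‖ ≤ ‖w - 1‖)
    (x : ℝ) (hx : x ∈ Set.Icc (-1 : ℝ) (-a) ∪ Set.Icc a 1) :
    (Complex.mk x (Real.sqrt (1 - x ^ 2))) ^ n = 1 ↔
      x = 1 ∨ x = -1 ∨ x = a ∨ x = -a :=
  stmt_11_general n hev a b ζ hb hab hζ hroot hmin x hx
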